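/- (Correctness of greedy deletion.) Let Suff : Finset (Fin n) → Prop be monotone (S ⊆ T and Suff S imply Suff T) with Suff Finset.univ. Define the greedy procedure that starts with X = Finset.univ and, iterating over features i = 0, …, n−1 in order, removes i from X whenever Suff (X \ {i}) holds. Then the resulting set X satisfies Suff X, and X is minimal in the sense that for every i ∈ X, Suff (X \ {i}) fails. -/

import Mathlib

open Classical in
noncomputable def greedyDelete {n : ℕ} (Suff : Finset (Fin n) → Prop) : Finset (Fin n) :=
  (List.finRange n).foldl
    (fun X i => if Suff (X \ {i}) then X \ {i} else X) Finset.univ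

/-!
Removing a feature never breaks sufficiency, so the invariant `Suff X` survives every step.
Once feature `i` has been examined it is either gone or was kept because `X \ {i}` was
insufficient; later sets are subsets of that `X`, so by monotonicity `i` stays non-removable.
-/

section DeleteStep

variable {α : Type*} [DecidableEq α]

def deleteStep (Suff : Finset α → Prop) [DecidablePred Suff] (X : Finset α) (i : α) :
    Finset α :=
  if Suff (X \ {i}) then X \ {i} else X

variable {Suff : Finset α → Prop}

theorem not_suff_sdiff_of_subset (hmono : Monotone Suff) {X Y : Finset α} (hYX : Y ⊆ X)
    {i : α} (h : ¬ Suff (X \ {i})) : ¬ Suff (Y \ {i}) :=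
  fun hY => h (hmono (Finset.sdiff_subset_sdiff hYX subset_rfl) hY)

variable [DecidablePred Suff]

theorem deleteStep_subset (X : Finset α) (i : α) : deleteStep Suff X i ⊆ X := by
  unfold deleteStep
  split_ifs
  exacts [Finset.sdiff_subset, subset_rfl]

theorem deleteStep_suff {X : Finset α} (hX : Suff X) (i : α) : Suff (deleteStep Suff X i) := by
  unfold deleteStep
  split_ifs with h
  exacts [h, hX]

theorem not_suff_sdiff_deleteStep {X : Finset α} {i : α} (hi : i ∈ deleteStep Suff X i) :
    ¬ Suff (deleteStep Suff X i \ {i}) := by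
  unfold deleteStep at hi ⊢
  split_ifs at hi ⊢ with h
  · simp at hi
  · exact h

theorem foldl_deleteStep_subset (l : List α) (X : Finset α) :
    l.foldl (deleteStep Suff) X ⊆ X := by
  induction l generalizing X with
  | nil => exact subset_rfl
  | cons a l ih => exact (ih _).trans (deleteStep_subset X a)

theorem foldl_deleteStep_suff (l : List α) {X : Finset α} (hX : Suff X) :
    Suff (l.foldl (deleteStep Suff) X) := by
  induction l generalizing X with
  | nil => exact hX
  | cons a l ih => exact ih (deleteStep_suff hX a)

theorem not_suff_sdiff_foldl_deleteStep (hmono : Monotone Suff) (l : List α) (X : Finset α)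
    {i : α} (hil : i ∈ l) (hi : i ∈ l.foldl (deleteStep Suff) X) :
    ¬ Suff (l.foldl (deleteStep Suff) X \ {i}) := by
  induction l generalizing X with
  | nil => simp at hil
  | cons a l ih =>
    rw [List.foldl_cons] at hi ⊢
    by_cases hl : i ∈ l
    · exact ih _ hl hi
    · obtain rfl : i = a := by simpa [hl] using hil
      have hsub := foldl_deleteStep_subset (Suff := Suff) l (deleteStep Suff X i)
      exact not_suff_sdiff_of_subset hmono hsub (not_suff_sdiff_deleteStep (hsub hi))

end DeleteStep

open Classical in
theorem greedyDelete_correct {n : ℕ} (Suff : Finset (Fin n) → Prop)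
    (hmono : ∀ S T : Finset (Fin n), S ⊆ T → Suff S → Suff T)
    (huniv : Suff Finset.univ) :
    Suff (greedyDelete Suff) ∧
    ∀ i ∈ greedyDelete Suff, ¬ Suff (greedyDelete Suff \ {i}) :=
  ⟨foldl_deleteStep_suff (Suff := Suff) _ huniv, fun i =>
    not_suff_sdiff_foldl_deleteStep (Suff := Suff) (fun S T h => hmono S T h) _ _
      (List.mem_finRange i)⟩
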